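/- arXiv:1811.08261 — 2 statements merged into one kernel-verified Lean document; each statement's English description precedes it below -/
import Mathlib

section
/- For any nonnegative integer k and positive integer l, the single sum ∑_{j≥0} x^j q^{lj + k j(j-1)/2} / (q; q)_j equals the double sum ∑_{m,n≥0} x^{m+n} q^{Q_{k,l}(m,n)} / ((q; q)_m (q^2; q^2)_{⌊n/2⌋}), where Q_{k,l}(m,n) = (m+n)l + k n(n-1)/2 + (n-1)mk + (k+1)m(m+1)/2. -/
open Finset

/-- Finite q-Pochhammer symbol `(a; q)_n = ∏_{j=0}^{n-1} (1 - a q^j)`. -/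
noncomputable def qPoch (a q : ℂ) (n : ℕ) : ℂ := ∏ j ∈ Finset.range n, (1 - a * q ^ j)

/-- Infinite q-Pochhammer symbol `(a; q)_∞`. -/
noncomputable def qPochInf (a q : ℂ) : ℂ := ∏' j : ℕ, (1 - a * q ^ j)

/-- Gaussian binomial coefficient `[a choose b]_q`, equal to
`(q;q)_a / ((q;q)_b (q;q)_{a-b})` when `a ≥ b ≥ 0`, and `0` otherwise. -/
noncomputable def qbinom (q : ℂ) (a b : ℤ) : ℂ :=
  if 0 ≤ b ∧ b ≤ a then
    qPoch q q a.toNat / (qPoch q q b.toNat * qPoch q q (a - b).toNat)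
  else 0

/-- `Q_{k,l}(m,n) = (m+n)l + k n(n-1)/2 + (n-1)mk + (k+1)m(m+1)/2` (an integer). -/
noncomputable def Qkl (k l m n : ℕ) : ℤ :=
  ((m : ℤ) + n) * l + k * (n * ((n : ℤ) - 1)) / 2 + ((n : ℤ) - 1) * m * k
    + ((k : ℤ) + 1) * (m * ((m : ℤ) + 1)) / 2

/-!
Since `Q_{k,l}(m,n) = l(m+n) + k·C(m+n,2) + C(m+1,2)`, comparing the terms with `m + n = j`
reduces the theorem to the finite identity
`∑_{m+n=j} q^{C(m+1,2)} / ((q;q)_m (q²;q²)_{⌊n/2⌋}) = 1/(q;q)_j`,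
the coefficient form of `(-xq;q)_∞ · (1+x)/(x²;q²)_∞ = 1/(x;q)_∞`, i.e. of
`(x;q)_∞ (-x;q)_∞ = (x²;q²)_∞`. It is checked on power series in `x`: `1/(x;q)_∞` is the only
series `F` with `F(0) = 1` and `F(x)(1-x) = F(qx)`, and the product of the two series on the
left satisfies this because `E(x) = (1+qx) E(qx)` for `E = (-xq;q)_∞` and
`B(x)(1-x)(1+qx) = B(qx)` for `B = (1+x)/(x²;q²)_∞`.
The double sum converges absolutely thanks to the uniform bound
`|(q;q)_n| ≥ exp(-(1-|q|)⁻²)`.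
-/

open PowerSeries

lemma exp_neg_div_le_one_sub {r t : ℝ} (ht : 0 ≤ t) (htr : t ≤ r) (hr : r < 1) :
    Real.exp (-(t / (1 - r))) ≤ 1 - t := by
  have hs : 0 ≤ t / (1 - r) := div_nonneg ht (by linarith)
  have h1 : t / (1 - r) + 1 ≤ Real.exp (t / (1 - r)) := Real.add_one_le_exp _
  have h2 : 1 ≤ (t / (1 - r) + 1) * (1 - t) := by
    rw [div_add_one (by linarith), div_mul_eq_mul_div, le_div_iff₀ (by linarith)]
    nlinarith
  rw [Real.exp_neg, inv_le_iff_one_le_mul₀ (Real.exp_pos _)]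
  nlinarith

lemma two_mul_choose_two (n : ℕ) : 2 * (n.choose 2 : ℤ) = n * (n - 1) := by
  have h := Nat.cast_choose_two ℚ n
  qify
  linarith

lemma Summable.tsum_eq_tsum_sum_antidiagonal {α A : Type*} [AddCommMonoid α] [TopologicalSpace α]
    [ContinuousAdd α] [T3Space α] [AddCommMonoid A] [HasAntidiagonal A] {f : A × A → α}
    (hf : Summable f) : ∑' p, f p = ∑' n, ∑ p ∈ antidiagonal n, f p := by
  conv_rhs => congr; ext; rw [← sum_finset_coe, ← tsum_fintype (L := .unconditional _)]
  rw [← HasAntidiagonal.sigmaAntidiagonalEquivProd.tsum_eq f]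
  exact (HasAntidiagonal.sigmaAntidiagonalEquivProd.summable_iff.mpr hf).tsum_sigma'
    fun _ => (hasSum_fintype _).summable

lemma coeff_succ_mul_one_sub_X {R : Type*} [Ring R] (F : PowerSeries R) (n : ℕ) :
    coeff (n + 1) (F * (1 - X)) = coeff (n + 1) F - coeff n F := by
  rw [mul_sub, mul_one, map_sub, coeff_succ_mul_X]

lemma exp_neg_le_norm_qPoch {q : ℂ} (hq : ‖q‖ < 1) (n : ℕ) :
    Real.exp (-((1 - ‖q‖)⁻¹ ^ 2)) ≤ ‖qPoch q q n‖ := by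
  set r := ‖q‖
  have hr : 0 ≤ r := norm_nonneg q
  have hgeom : ∑ j ∈ range n, r ^ (j + 1) ≤ (1 - r)⁻¹ := by
    calc ∑ j ∈ range n, r ^ (j + 1) ≤ ∑ j ∈ range (n + 1), r ^ j := by
          rw [sum_range_succ', pow_zero]; exact le_add_of_nonneg_right zero_le_one
      _ ≤ (1 - r)⁻¹ := by
          have h := geom_sum_Ico_le_of_lt_one (m := 0) (n := n + 1) hr hq
          rwa [← range_eq_Ico, pow_zero, one_div] at h
  calc Real.exp (-((1 - r)⁻¹ ^ 2))
      ≤ Real.exp (∑ j ∈ range n, -(r ^ (j + 1) / (1 - r))) := by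
        rw [Real.exp_le_exp, sum_neg_distrib, ← sum_div, neg_le_neg_iff, sq, div_eq_mul_inv]
        exact mul_le_mul_of_nonneg_right hgeom (by simp; linarith)
    _ = ∏ j ∈ range n, Real.exp (-(r ^ (j + 1) / (1 - r))) := Real.exp_sum _ _
    _ ≤ ∏ j ∈ range n, ‖1 - q * q ^ j‖ := by
        refine prod_le_prod (fun _ _ => (Real.exp_pos _).le) fun j _ => ?_
        calc Real.exp (-(r ^ (j + 1) / (1 - r))) ≤ 1 - r ^ (j + 1) :=
              exp_neg_div_le_one_sub (pow_nonneg hr _) (pow_le_of_le_one hr hq.le j.succ_ne_zero) hq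
          _ = ‖(1 : ℂ)‖ - ‖q * q ^ j‖ := by rw [norm_one, norm_mul, norm_pow, pow_succ']
          _ ≤ ‖1 - q * q ^ j‖ := norm_sub_norm_le _ _
    _ = ‖qPoch q q n‖ := by rw [qPoch, norm_prod]

lemma qPoch_ne_zero {q : ℂ} (hq : ‖q‖ < 1) (n : ℕ) : qPoch q q n ≠ 0 :=
  norm_pos_iff.mp ((Real.exp_pos _).trans_le (exp_neg_le_norm_qPoch hq n))

lemma qPoch_self_succ (q : ℂ) (n : ℕ) : qPoch q q (n + 1) = qPoch q q n * (1 - q ^ (n + 1)) := by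
  rw [qPoch, prod_range_succ, pow_succ']
  rfl

lemma one_sub_pow_succ_ne_zero {q : ℂ} (hq : ‖q‖ < 1) (n : ℕ) : 1 - q ^ (n + 1) ≠ 0 :=
  right_ne_zero_of_mul (qPoch_self_succ q n ▸ qPoch_ne_zero hq (n + 1))

lemma qPoch_inv_succ_sub {q : ℂ} (hq : ‖q‖ < 1) (n : ℕ) :
    (qPoch q q (n + 1))⁻¹ - (qPoch q q n)⁻¹ = q ^ (n + 1) * (qPoch q q (n + 1))⁻¹ := by
  have hn := qPoch_ne_zero hq n
  have hu := one_sub_pow_succ_ne_zero hq n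
  rw [qPoch_self_succ]
  field_simp
  ring

lemma norm_sq_lt_one {q : ℂ} (hq : ‖q‖ < 1) : ‖q ^ 2‖ < 1 := by
  rw [norm_pow]
  exact pow_lt_one₀ (norm_nonneg q) hq two_ne_zero

noncomputable def invQPochSeries (q : ℂ) : PowerSeries ℂ := mk fun n => (qPoch q q n)⁻¹

-- By Euler, these are `(-xq;q)_∞` and `(1+x)/(x²;q²)_∞`; only their functional equations are used.
noncomputable def distinctPartsSeries (q : ℂ) : PowerSeries ℂ :=
  mk fun n => q ^ (n + 1).choose 2 * (qPoch q q n)⁻¹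

noncomputable def halfInvQPochSeries (q : ℂ) : PowerSeries ℂ :=
  mk fun n => (qPoch (q ^ 2) (q ^ 2) (n / 2))⁻¹

lemma eq_invQPochSeries {q : ℂ} (hq : ‖q‖ < 1) {F : PowerSeries ℂ} (h0 : coeff 0 F = 1)
    (h : F * (1 - X) = rescale q F) : F = invQPochSeries q := by
  suffices hF : ∀ n, coeff n F = (qPoch q q n)⁻¹ by ext n; rw [hF, invQPochSeries, coeff_mk]
  intro n
  induction n with
  | zero => simp [h0, qPoch]
  | succ n ih =>
    have hn := congrArg (coeff (n + 1)) h
    rw [coeff_succ_mul_one_sub_X, coeff_rescale, ih] at hn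
    apply mul_right_cancel₀ (one_sub_pow_succ_ne_zero hq n)
    linear_combination hn - qPoch_inv_succ_sub hq n

lemma distinctPartsSeries_eq {q : ℂ} (hq : ‖q‖ < 1) :
    distinctPartsSeries q = (1 + C q * X) * rescale q (distinctPartsSeries q) := by
  ext n
  rw [add_mul, one_mul, mul_assoc, map_add, coeff_C_mul, coeff_rescale]
  rcases n with _ | n
  · simp [coeff_zero_X_mul]
  · rw [coeff_succ_X_mul, coeff_rescale, distinctPartsSeries, coeff_mk, coeff_mk]
    have hc : (n + 1 + 1).choose 2 = (n + 1).choose 2 + (n + 1) := by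
      rw [Nat.choose_succ_succ', Nat.choose_one_right, add_comm]
    rw [hc, pow_add]
    linear_combination q ^ (n + 1).choose 2 * q ^ (n + 1) * qPoch_inv_succ_sub hq n

lemma coeff_halfInvQPochSeries_mul_one_sub_X {q : ℂ} (hq : ‖q‖ < 1) (n : ℕ) :
    coeff n (halfInvQPochSeries q * (1 - X)) =
      if Even n then q ^ n * coeff n (halfInvQPochSeries q) else 0 := by
  rcases n with _ | n
  · simp [halfInvQPochSeries]
  rw [coeff_succ_mul_one_sub_X, halfInvQPochSeries, coeff_mk, coeff_mk]
  rcases Nat.even_or_odd n with ⟨t, rfl⟩ | ⟨t, rfl⟩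
  · have h1 : ¬ Even (t + t + 1) := by simp
    rw [if_neg h1, show (t + t + 1) / 2 = (t + t) / 2 by omega, sub_self]
  · have h1 : Even (2 * t + 1 + 1) := ⟨t + 1, by ring⟩
    rw [if_pos h1, show (2 * t + 1 + 1) / 2 = t + 1 by omega, show (2 * t + 1) / 2 = t by omega,
      qPoch_inv_succ_sub (norm_sq_lt_one hq) t, ← pow_mul]
    ring_nf

lemma halfInvQPochSeries_mul {q : ℂ} (hq : ‖q‖ < 1) :
    halfInvQPochSeries q * ((1 - X) * (1 + C q * X)) = rescale q (halfInvQPochSeries q) := by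
  ext n
  rw [← mul_assoc, mul_add, mul_one, mul_left_comm, map_add, coeff_C_mul, coeff_rescale]
  rcases n with _ | n
  · simp [coeff_halfInvQPochSeries_mul_one_sub_X hq]
  rw [coeff_succ_mul_X, coeff_halfInvQPochSeries_mul_one_sub_X hq,
    coeff_halfInvQPochSeries_mul_one_sub_X hq, halfInvQPochSeries, coeff_mk, coeff_mk]
  rcases Nat.even_or_odd n with ⟨t, rfl⟩ | ⟨t, rfl⟩
  · have h1 : ¬ Even (t + t + 1) := by simp
    rw [if_neg h1, if_pos ⟨t, rfl⟩, show (t + t + 1) / 2 = (t + t) / 2 by omega]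
    ring
  · have h1 : Even (2 * t + 1 + 1) := ⟨t + 1, by ring⟩
    have h2 : ¬ Even (2 * t + 1) := by simp
    rw [if_pos h1, if_neg h2]
    ring

lemma distinctPartsSeries_mul_halfInvQPochSeries {q : ℂ} (hq : ‖q‖ < 1) :
    distinctPartsSeries q * halfInvQPochSeries q = invQPochSeries q := by
  refine eq_invQPochSeries hq ?_ ?_
  · simp [coeff_mul, distinctPartsSeries, halfInvQPochSeries, qPoch]
  · conv_lhs => rw [distinctPartsSeries_eq hq]
    rw [map_mul, ← halfInvQPochSeries_mul hq]
    ring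

lemma Qkl_eq (k l m n : ℕ) :
    Qkl k l m n = ((l * (m + n) + k * (m + n).choose 2 + (m + 1).choose 2 : ℕ) : ℤ) := by
  have hn := two_mul_choose_two n
  have hm := two_mul_choose_two (m + 1)
  have hmn := two_mul_choose_two (m + n)
  push_cast at hm hmn ⊢
  rw [Qkl, ← hn, show (m : ℤ) * (m + 1) = (m + 1) * (m + 1 - 1) by ring, ← hm,
    mul_left_comm, Int.mul_ediv_cancel_left _ two_ne_zero, mul_left_comm,
    Int.mul_ediv_cancel_left _ two_ne_zero]
  apply mul_left_cancel₀ (two_ne_zero : (2 : ℤ) ≠ 0)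
  linear_combination (k : ℤ) * (hn + hm - hmn)

lemma summable_pow_div_qPoch_mul_qPoch {q x : ℂ} (hq : ‖q‖ < 1) (hx : ‖x‖ < 1) (e : ℕ × ℕ → ℕ) :
    Summable fun p : ℕ × ℕ =>
      x ^ (p.1 + p.2) * q ^ e p / (qPoch q q p.1 * qPoch (q ^ 2) (q ^ 2) (p.2 / 2)) := by
  set c₁ := Real.exp (-((1 - ‖q‖)⁻¹ ^ 2))
  set c₂ := Real.exp (-((1 - ‖q ^ 2‖)⁻¹ ^ 2))
  have hgeom (c : ℝ) : Summable fun i : ℕ => c⁻¹ * ‖x‖ ^ i :=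
    (summable_geometric_of_lt_one (norm_nonneg x) hx).mul_left _
  refine Summable.of_norm_bounded ((hgeom c₁).mul_of_nonneg (hgeom c₂) (fun i => by positivity)
    (fun i => by positivity)) fun ⟨m, n⟩ => ?_
  have hden : c₁ * c₂ ≤ ‖qPoch q q m * qPoch (q ^ 2) (q ^ 2) (n / 2)‖ := by
    rw [norm_mul]
    exact mul_le_mul (exp_neg_le_norm_qPoch hq m) (exp_neg_le_norm_qPoch (norm_sq_lt_one hq) (n / 2))
      (Real.exp_pos _).le (norm_nonneg _)
  have hnum : ‖x ^ (m + n) * q ^ e (m, n)‖ ≤ ‖x‖ ^ m * ‖x‖ ^ n := by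
    rw [norm_mul, norm_pow, norm_pow, pow_add]
    exact mul_le_of_le_one_right (by positivity) (pow_le_one₀ (norm_nonneg q) hq.le)
  calc ‖x ^ (m + n) * q ^ e (m, n) / (qPoch q q m * qPoch (q ^ 2) (q ^ 2) (n / 2))‖
      ≤ ‖x‖ ^ m * ‖x‖ ^ n / (c₁ * c₂) := by
        rw [norm_div]
        exact div_le_div₀ (by positivity) hnum (by positivity) hden
    _ = c₁⁻¹ * ‖x‖ ^ m * (c₂⁻¹ * ‖x‖ ^ n) := by field_simp

lemma sum_antidiagonal_pow_choose_div_qPoch {q : ℂ} (hq : ‖q‖ < 1) (j : ℕ) :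
    ∑ p ∈ antidiagonal j,
      q ^ (p.1 + 1).choose 2 / (qPoch q q p.1 * qPoch (q ^ 2) (q ^ 2) (p.2 / 2))
      = (qPoch q q j)⁻¹ := by
  have h := congrArg (coeff j) (distinctPartsSeries_mul_halfInvQPochSeries hq)
  rw [coeff_mul] at h
  simpa only [distinctPartsSeries, halfInvQPochSeries, invQPochSeries, coeff_mk, div_eq_mul_inv,
    mul_inv, mul_assoc] using h

theorem stmt1_general (k l : ℕ) (q x : ℂ) (hq : ‖q‖ < 1) (hx : ‖x‖ < 1) :
    ∑' j : ℕ, x ^ j * q ^ (l * j + k * (j * (j - 1) / 2)) / qPoch q q j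
      = ∑' p : ℕ × ℕ, x ^ (p.1 + p.2) * q ^ (Qkl k l p.1 p.2)
          / (qPoch q q p.1 * qPoch (q ^ 2) (q ^ 2) (p.2 / 2)) := by
  simp_rw [Qkl_eq, zpow_natCast]
  rw [(summable_pow_div_qPoch_mul_qPoch hq hx _).tsum_eq_tsum_sum_antidiagonal]
  refine tsum_congr fun j => ?_
  have hterm : ∀ p ∈ antidiagonal j,
      x ^ (p.1 + p.2) * q ^ (l * (p.1 + p.2) + k * (p.1 + p.2).choose 2 + (p.1 + 1).choose 2)
        / (qPoch q q p.1 * qPoch (q ^ 2) (q ^ 2) (p.2 / 2))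
      = x ^ j * q ^ (l * j + k * (j * (j - 1) / 2))
        * (q ^ (p.1 + 1).choose 2 / (qPoch q q p.1 * qPoch (q ^ 2) (q ^ 2) (p.2 / 2))) := by
    intro p hp
    rw [mem_antidiagonal.mp hp, ← Nat.choose_two_right, pow_add]
    ring
  rw [sum_congr rfl hterm, ← mul_sum, sum_antidiagonal_pow_choose_div_qPoch hq, div_eq_mul_inv]

/-- single-sum = double-sum representation for partitions with
uniform gap conditions. -/
theorem stmt1 (k l : ℕ) (hl : 0 < l) (q x : ℂ) (hq0 : q ≠ 0) (hq : ‖q‖ < 1)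
    (hx : ‖x‖ < 1) :
    ∑' j : ℕ, x ^ j * q ^ (l * j + k * (j * (j - 1) / 2)) / qPoch q q j
      = ∑' p : ℕ × ℕ, x ^ (p.1 + p.2) * q ^ (Qkl k l p.1 p.2)
          / (qPoch q q p.1 * qPoch (q ^ 2) (q ^ 2) (p.2 / 2)) :=
  stmt1_general k l q x hq hx
end

section
/- For M and s positive integers and 0 ≤ r ≤ M, the identity (−x q^{s+r}; q^M)_∞ / (x q^s; q^M)_∞ = ₂φ₁(−q^r, −q^{r+M}; q^M; q^{2M}, x² q^{2s}) + x q^s (1 + q^r)/(1 − q^M) · ₂φ₁(−q^{r+2M}, −q^{r+M}; q^{3M}; q^{2M}, x² q^{2s}) holds as formal power series in x and q (or for |q| < 1, |x| small). -/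
/-!
With `a = -q^r`, `Q = q^M`, `w = x q^s` the left side is `(a w; Q)_∞ / (w; Q)_∞`, which the
q-binomial theorem expands as `₁φ₀(a; –; Q, w) = ∑ (a; Q)_n / (Q; Q)_n wⁿ`. That theorem comes
from the functional equation `(1 - w) φ(w) = (1 - a w) φ(Q w)`, a coefficient recurrence;
iterating it `n` times gives `(w; Q)_n φ(w) = (a w; Q)_n φ(Qⁿ w)`, and `φ(Qⁿ w) → φ(0) = 1`.
Splitting the series into even and odd `n` and using `(a; Q)_{2k} = (a; Q²)_k (a Q; Q²)_k`
turns the two halves into the two `₂φ₁` series in base `Q²` and argument `w²`.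
-/

open Finset

/-- Basic hypergeometric series `₂φ₁(a, b; c; Q, z)`. -/
noncomputable def phi21 (a b c Q z : ℂ) : ℂ :=
  ∑' n : ℕ, qPoch a Q n * qPoch b Q n / (qPoch Q Q n * qPoch c Q n) * z ^ n

open Filter Topology

lemma qPoch_zero (a Q : ℂ) : qPoch a Q 0 = 1 :=
  prod_range_zero _

lemma qPoch_succ (a Q : ℂ) (n : ℕ) : qPoch a Q (n + 1) = qPoch a Q n * (1 - a * Q ^ n) :=
  prod_range_succ _ n

lemma qPoch_succ' (a Q : ℂ) (n : ℕ) : qPoch a Q (n + 1) = (1 - a) * qPoch (a * Q) Q n := by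
  simp only [qPoch, prod_range_succ', pow_succ', pow_zero, mul_one, mul_assoc, mul_comm (1 - a)]

lemma qPoch_two_mul (a Q : ℂ) (k : ℕ) :
    qPoch a Q (2 * k) = qPoch a (Q ^ 2) k * qPoch (a * Q) (Q ^ 2) k := by
  induction k with
  | zero => simp only [mul_zero, qPoch_zero, mul_one]
  | succ k ih =>
    rw [mul_add_one, qPoch_succ, qPoch_succ, ih, qPoch_succ, qPoch_succ]
    ring

lemma norm_mul_pow_le (a : ℂ) {Q : ℂ} (hQ : ‖Q‖ ≤ 1) (n : ℕ) : ‖a * Q ^ n‖ ≤ ‖a‖ := by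
  rw [norm_mul, norm_pow]
  exact mul_le_of_le_one_right (norm_nonneg a) (pow_le_one₀ (norm_nonneg Q) hQ)

lemma one_sub_mul_pow_ne_zero {a Q : ℂ} (ha : ‖a‖ < 1) (hQ : ‖Q‖ ≤ 1) (n : ℕ) :
    1 - a * Q ^ n ≠ 0 := by
  refine sub_ne_zero.2 fun h => ?_
  have := (norm_mul_pow_le a hQ n).trans_lt ha
  simp [← h] at this

lemma qPoch_ne_zero_s14 {a Q : ℂ} (ha : ‖a‖ < 1) (hQ : ‖Q‖ ≤ 1) (n : ℕ) : qPoch a Q n ≠ 0 :=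
  prod_ne_zero_iff.2 fun j _ => one_sub_mul_pow_ne_zero ha hQ j

lemma summable_norm_neg_mul_pow (w : ℂ) {Q : ℂ} (hQ : ‖Q‖ < 1) :
    Summable fun j : ℕ => ‖-(w * Q ^ j)‖ := by
  simpa only [norm_neg, norm_mul, norm_pow] using
    (summable_geometric_of_lt_one (norm_nonneg Q) hQ).mul_left ‖w‖

lemma tendsto_qPoch (w : ℂ) {Q : ℂ} (hQ : ‖Q‖ < 1) :
    Tendsto (fun n => qPoch w Q n) atTop (𝓝 (qPochInf w Q)) := by
  simpa only [qPoch, qPochInf, ← sub_eq_add_neg] using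
    (multipliable_one_add_of_summable (summable_norm_neg_mul_pow w hQ)).hasProd.tendsto_prod_nat

lemma qPochInf_ne_zero {w Q : ℂ} (hw : ‖w‖ < 1) (hQ : ‖Q‖ < 1) : qPochInf w Q ≠ 0 := by
  simpa only [qPochInf, ← sub_eq_add_neg] using
    tprod_one_add_ne_zero_of_summable (fun j => by
      rw [← sub_eq_add_neg]; exact one_sub_mul_pow_ne_zero hw hQ.le j)
      (summable_norm_neg_mul_pow w hQ)

/-- The q-binomial series `₁φ₀(a; –; Q, w)`. -/
noncomputable def phi10 (a Q w : ℂ) : ℂ := ∑' n : ℕ, qPoch a Q n / qPoch Q Q n * w ^ n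

lemma exists_norm_qPoch_div_qPoch_le (a : ℂ) {Q : ℂ} (hQ : ‖Q‖ < 1) :
    ∃ C, ∀ n, ‖qPoch a Q n / qPoch Q Q n‖ ≤ C := by
  have h := (tendsto_qPoch a hQ).div (tendsto_qPoch Q hQ) (qPochInf_ne_zero hQ hQ)
  obtain ⟨C, hC⟩ := isBounded_iff_forall_norm_le.1 (Metric.isBounded_range_of_tendsto _ h)
  exact ⟨C, fun n => hC _ ⟨n, rfl⟩⟩

lemma summable_phi10 (a : ℂ) {Q w : ℂ} (hQ : ‖Q‖ < 1) (hw : ‖w‖ < 1) :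
    Summable fun n => qPoch a Q n / qPoch Q Q n * w ^ n := by
  obtain ⟨C, hC⟩ := exists_norm_qPoch_div_qPoch_le a hQ
  refine .of_norm_bounded ((summable_geometric_of_lt_one (norm_nonneg w) hw).mul_left C)
    fun n => ?_
  rw [norm_mul, norm_pow]
  exact mul_le_mul_of_nonneg_right (hC n) (by positivity)

lemma qPoch_div_qPoch_succ_mul (a : ℂ) {Q : ℂ} (hQ : ‖Q‖ < 1) (n : ℕ) :
    qPoch a Q (n + 1) / qPoch Q Q (n + 1) * (1 - Q ^ (n + 1))
      = qPoch a Q n / qPoch Q Q n * (1 - a * Q ^ n) := by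
  have h₁ := qPoch_ne_zero_s14 hQ hQ.le n
  have h₂ : 1 - Q ^ (n + 1) ≠ 0 := by
    simpa only [← pow_succ'] using one_sub_mul_pow_ne_zero hQ hQ.le n
  rw [qPoch_succ, qPoch_succ Q, ← pow_succ']
  field_simp

lemma phi10_functional_eq (a : ℂ) {Q w : ℂ} (hQ : ‖Q‖ < 1) (hw : ‖w‖ < 1) :
    (1 - w) * phi10 a Q w = (1 - a * w) * phi10 a Q (Q * w) := by
  set c := fun n => qPoch a Q n / qPoch Q Q n
  have hQw : ‖Q * w‖ < 1 := by
    simpa only [pow_one, mul_comm w] using (norm_mul_pow_le w hQ.le 1).trans_lt hw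
  have hs := summable_phi10 a hQ hw
  have hs' := summable_phi10 a hQ hQw
  have hdiff : Summable fun n => c n * (1 - Q ^ n) * w ^ n :=
    (hs.sub hs').congr fun n => by simp only [c, mul_pow]; ring
  have key : phi10 a Q w - phi10 a Q (Q * w) = w * (phi10 a Q w - a * phi10 a Q (Q * w)) :=
    calc phi10 a Q w - phi10 a Q (Q * w) = ∑' n, c n * (1 - Q ^ n) * w ^ n := by
          rw [phi10, phi10, ← hs.tsum_sub hs']
          exact tsum_congr fun n => by simp only [c, mul_pow]; ring
      _ = ∑' n, c (n + 1) * (1 - Q ^ (n + 1)) * w ^ (n + 1) := by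
          simp [hdiff.tsum_eq_zero_add]
      _ = ∑' n, w * (c n * w ^ n - a * (c n * (Q * w) ^ n)) := by
          refine tsum_congr fun n => ?_
          simp only [c, mul_pow, qPoch_div_qPoch_succ_mul a hQ n]
          ring
      _ = w * (phi10 a Q w - a * phi10 a Q (Q * w)) := by
          rw [tsum_mul_left, hs.tsum_sub (hs'.mul_left a), tsum_mul_left, phi10, phi10]
  linear_combination key

lemma qPoch_mul_phi10_eq (a : ℂ) {Q w : ℂ} (hQ : ‖Q‖ < 1) (hw : ‖w‖ < 1) (n : ℕ) :
    qPoch w Q n * phi10 a Q w = qPoch (a * w) Q n * phi10 a Q (Q ^ n * w) := by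
  induction n with
  | zero => simp [qPoch_zero]
  | succ n ih =>
    have hn : ‖Q ^ n * w‖ < 1 := by
      simpa only [mul_comm w] using (norm_mul_pow_le w hQ.le n).trans_lt hw
    have feq := phi10_functional_eq a hQ hn
    rw [qPoch_succ, qPoch_succ, pow_succ', mul_assoc Q]
    linear_combination (1 - w * Q ^ n) * ih + qPoch (a * w) Q n * feq

lemma tendsto_phi10_pow_mul (a : ℂ) {Q w : ℂ} (hQ : ‖Q‖ < 1) (hw : ‖w‖ < 1) :
    Tendsto (fun n => phi10 a Q (Q ^ n * w)) atTop (𝓝 1) := by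
  obtain ⟨C, hC⟩ := exists_norm_qPoch_div_qPoch_le a hQ
  have hlim := tendsto_tsum_of_dominated_convergence
    (f := fun n k => qPoch a Q k / qPoch Q Q k * (Q ^ n * w) ^ k)
    (g := fun k => qPoch a Q k / qPoch Q Q k * 0 ^ k)
    ((summable_geometric_of_lt_one (norm_nonneg w) hw).mul_left C)
    (fun k => by
      have hpow := tendsto_pow_atTop_nhds_zero_of_norm_lt_one hQ
      simpa using ((hpow.mul_const w).pow k).const_mul (qPoch a Q k / qPoch Q Q k))
    (.of_forall fun n k => by
      rw [norm_mul, norm_pow]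
      refine mul_le_mul (hC k) (pow_le_pow_left₀ (norm_nonneg _) ?_ k) (by positivity)
        ((norm_nonneg _).trans (hC 0))
      simpa only [mul_comm w] using norm_mul_pow_le w hQ.le n)
  rwa [tsum_eq_single 0 fun k hk => by simp [hk], pow_zero, mul_one, qPoch_zero, qPoch_zero,
    div_one] at hlim

theorem phi10_eq_qPochInf_div (a : ℂ) {Q w : ℂ} (hQ : ‖Q‖ < 1) (hw : ‖w‖ < 1) :
    phi10 a Q w = qPochInf (a * w) Q / qPochInf w Q := by
  rw [eq_div_iff (qPochInf_ne_zero hw hQ), mul_comm]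
  refine tendsto_nhds_unique ((tendsto_qPoch w hQ).mul_const _) ?_
  simpa only [qPoch_mul_phi10_eq a hQ hw, mul_one] using
    (tendsto_qPoch (a * w) hQ).mul (tendsto_phi10_pow_mul a hQ hw)

lemma tsum_mul_pow_eq_even_add_odd {𝕜 : Type*} [NormedField 𝕜] [CompleteSpace 𝕜] {c : ℕ → 𝕜}
    {w : 𝕜} (h : Summable fun n => c n * w ^ n) :
    ∑' n, c n * w ^ n
      = ∑' k, c (2 * k) * (w ^ 2) ^ k + w * ∑' k, c (2 * k + 1) * (w ^ 2) ^ k := by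
  have h_even : Summable fun k => c (2 * k) * w ^ (2 * k) :=
    h.comp_injective (mul_right_injective₀ two_ne_zero)
  have h_odd : Summable fun k => c (2 * k + 1) * w ^ (2 * k + 1) :=
    h.comp_injective ((add_left_injective 1).comp (mul_right_injective₀ two_ne_zero))
  rw [← tsum_even_add_odd (f := fun n => c n * w ^ n) h_even h_odd, ← tsum_mul_left]
  congr 1 <;> refine tsum_congr fun k => ?_ <;> ring

lemma phi10_eq_even_add_odd (a : ℂ) {Q w : ℂ} (hQ : ‖Q‖ < 1) (hw : ‖w‖ < 1) :
    phi10 a Q w = phi21 a (a * Q) Q (Q ^ 2) (w ^ 2)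
      + w * (1 - a) / (1 - Q) * phi21 (a * Q ^ 2) (a * Q) (Q ^ 3) (Q ^ 2) (w ^ 2) := by
  rw [phi10, tsum_mul_pow_eq_even_add_odd (summable_phi10 a hQ hw), phi21, phi21,
    ← tsum_mul_left, ← tsum_mul_left]
  congr 1
  · refine tsum_congr fun k => ?_
    rw [qPoch_two_mul, qPoch_two_mul, ← sq]
    ring
  · refine tsum_congr fun k => ?_
    rw [qPoch_succ', qPoch_succ', qPoch_two_mul, qPoch_two_mul, mul_assoc a, ← sq,
      ← pow_succ]
    simp only [div_eq_mul_inv, mul_inv]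
    ring

theorem stmt14_general (M s r : ℕ) (hM : 0 < M)
    (q x : ℂ) (hq : ‖q‖ < 1) (hx : ‖x‖ < 1) :
    qPochInf (-(x * q ^ (s + r))) (q ^ M) / qPochInf (x * q ^ s) (q ^ M)
      = phi21 (-(q ^ r)) (-(q ^ (r + M))) (q ^ M) (q ^ (2 * M)) (x ^ 2 * q ^ (2 * s))
        + x * q ^ s * (1 + q ^ r) / (1 - q ^ M)
          * phi21 (-(q ^ (r + 2 * M))) (-(q ^ (r + M))) (q ^ (3 * M)) (q ^ (2 * M))
              (x ^ 2 * q ^ (2 * s)) := by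
  have hQ : ‖q ^ M‖ < 1 := by
    rw [norm_pow]
    exact pow_lt_one₀ (norm_nonneg q) hq hM.ne'
  have hw : ‖x * q ^ s‖ < 1 := (norm_mul_pow_le x hq.le s).trans_lt hx
  have key := phi10_eq_even_add_odd (-(q ^ r)) hQ hw
  have h₁ : -(q ^ r) * (x * q ^ s) = -(x * q ^ (s + r)) := by ring
  have h₂ : -(q ^ r) * q ^ M = -(q ^ (r + M)) := by ring
  have h₃ : -(q ^ r) * (q ^ M) ^ 2 = -(q ^ (r + 2 * M)) := by ring
  have h₄ : (x * q ^ s) ^ 2 = x ^ 2 * q ^ (2 * s) := by ring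
  rwa [phi10_eq_qPochInf_div _ hQ hw, h₁, h₂, h₃, h₄, ← pow_mul, ← pow_mul, sub_neg_eq_add,
    mul_comm M, mul_comm M] at key

/-- even–odd dissection of `(−xq^{s+r};q^M)_∞/(xq^s;q^M)_∞`. -/
theorem stmt14 (M s r : ℕ) (hM : 0 < M) (hs : 0 < s) (hr : r ≤ M)
    (q x : ℂ) (hq : ‖q‖ < 1) (hx : ‖x‖ < 1) :
    qPochInf (-(x * q ^ (s + r))) (q ^ M) / qPochInf (x * q ^ s) (q ^ M)
      = phi21 (-(q ^ r)) (-(q ^ (r + M))) (q ^ M) (q ^ (2 * M)) (x ^ 2 * q ^ (2 * s))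
        + x * q ^ s * (1 + q ^ r) / (1 - q ^ M)
          * phi21 (-(q ^ (r + 2 * M))) (-(q ^ (r + M))) (q ^ (3 * M)) (q ^ (2 * M))
              (x ^ 2 * q ^ (2 * s)) :=
  stmt14_general M s r hM q x hq hx
end
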